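/- arXiv:1806.03635 — 2 statements merged into one kernel-verified Lean document; each statement's English description precedes it below -/
import Mathlib

section
/- Let G be a finite group, H a subgroup of G, and let K = Z(G)·H be the subgroup generated by the center Z(G) of G together with H. Assume K is normal in G and the quotient group G/K is cyclic. Then every irreducible finite-dimensional complex representation π of G restricts to H without multiplicity: for every irreducible finite-dimensional complex representation ρ of H, dim Hom_H(ρ, Res_H π) ≤ 1. -/
noncomputable section

namespace RestrictionMult

variable {G : Type*} [Group G]

/-- The submodule of equivariant linear maps between two representations. -/
def equivariantHoms {V W : Type*} [AddCommGroup V] [Module ℂ V]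
    [AddCommGroup W] [Module ℂ W]
    (π : Representation ℂ G V) (σ : Representation ℂ G W) :
    Submodule ℂ (V →ₗ[ℂ] W) where
  carrier := {f | ∀ g v, f (π g v) = σ g (f v)}
  add_mem' := by intro f₁ f₂ h₁ h₂ g v; simp [h₁ g v, h₂ g v]
  zero_mem' := by intro g v; simp
  smul_mem' := by intro c f hf g v; simp [hf g v]

/-- Two representations are equivalent (isomorphic). -/
def IsRepEquiv {V W : Type*} [AddCommGroup V] [Module ℂ V]
    [AddCommGroup W] [Module ℂ W]
    (π : Representation ℂ G V) (σ : Representation ℂ G W) : Prop :=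
  ∃ e : V ≃ₗ[ℂ] W, ∀ g v, e (π g v) = σ g (e v)

/-- A representation is irreducible if the space is nonzero and the only invariant
submodules are `⊥` and `⊤`. -/
def IsIrreducibleRep {V : Type*} [AddCommGroup V] [Module ℂ V]
    (π : Representation ℂ G V) : Prop :=
  (∃ v : V, v ≠ 0) ∧
    ∀ U : Submodule ℂ V, (∀ g, ∀ v ∈ U, π g v ∈ U) → U = ⊥ ∨ U = ⊤

/-- The twist of a representation by a character `χ : G →* ℂˣ`. -/
def twist {V : Type*} [AddCommGroup V] [Module ℂ V]
    (π : Representation ℂ G V) (χ : G →* ℂˣ) : Representation ℂ G V where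
  toFun g := (χ g : ℂ) • π g
  map_one' := by simp
  map_mul' g h := by
    ext v
    simp only [Module.End.mul_apply, LinearMap.smul_apply, map_smul, map_mul, Units.val_mul,
      mul_smul]
    rw [smul_comm]

/-- The direct sum of two representations. -/
def dsum {V W : Type*} [AddCommGroup V] [Module ℂ V]
    [AddCommGroup W] [Module ℂ W]
    (π : Representation ℂ G V) (σ : Representation ℂ G W) :
    Representation ℂ G (V × W) where
  toFun g := (π g).prodMap (σ g)
  map_one' := by ext v <;> simp
  map_mul' g h := by ext v <;> simp [Module.End.mul_apply]

/-- The subrepresentation on an invariant submodule. -/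
def resSub {V : Type*} [AddCommGroup V] [Module ℂ V]
    (π : Representation ℂ G V) (U : Submodule ℂ V)
    (hU : ∀ g, ∀ v ∈ U, π g v ∈ U) : Representation ℂ G U where
  toFun g := (π g).restrict (fun v hv => hU g v hv)
  map_one' := by ext v; simp [LinearMap.restrict_apply]
  map_mul' g h := by ext v; simp [LinearMap.restrict_apply, Module.End.mul_apply]

/-- The conjugate `π^g` of a representation of a normal subgroup `N`,
given by `x ↦ π (g⁻¹ x g)`. -/
def conjRep {N : Subgroup G} [N.Normal] {V : Type*} [AddCommGroup V] [Module ℂ V]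
    (π : Representation ℂ N V) (g : G) : Representation ℂ N V :=
  π.comp (MulAut.conjNormal g⁻¹ : N ≃* N).toMonoidHom

/-- The space of the representation of `G` induced from a representation of a
subgroup `N`: functions `f : G → V` with `f (n * x) = π n (f x)`. -/
def indSubmodule (N : Subgroup G) {V : Type*} [AddCommGroup V] [Module ℂ V]
    (π : Representation ℂ N V) : Submodule ℂ (G → V) where
  carrier := {f | ∀ (n : N) (x : G), f (n * x) = π n (f x)}
  add_mem' := by intro f₁ f₂ h₁ h₂ n x; simp [h₁ n x, h₂ n x]
  zero_mem' := by intro n x; simp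
  smul_mem' := by intro c f hf n x; simp [hf n x]

/-- The representation of `G` induced from a representation `π` of a subgroup `N`,
acting by right translation on `indSubmodule N π`. -/
def ind (N : Subgroup G) {V : Type*} [AddCommGroup V] [Module ℂ V]
    (π : Representation ℂ N V) : Representation ℂ G (indSubmodule N π) where
  toFun g :=
    { toFun := fun f => ⟨fun x => (f : G → V) (x * g),
        fun n x => by simpa [mul_assoc] using f.2 n (x * g)⟩
      map_add' := fun f₁ f₂ => by ext x; rfl
      map_smul' := fun c f => by ext x; rfl }
  map_one' := by ext f x; simp
  map_mul' g h := by ext f x; simp [Module.End.mul_apply, mul_assoc]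

/-!
Write `K = Z(G) ⊔ H`. Central elements act on `π` by scalars (Schur), so the commutant `C` of
`π|_H` is that of `π|_K`, and it suffices to show that `C` is commutative: for an irreducible `ρ`
and a nonzero `f₁ : ρ → π|_H` with an equivariant left inverse `p` (averaging over `H`), every
`f₂` satisfies `f₂ = (f₂ p) (f₁ p) f₁ = (f₁ p) (f₂ p) f₁ = f₁ (p f₂)`, and `p f₂` is a scalar.

Let `g₀` generate `G / K`. Conjugation by `π g₀` is an automorphism `α` of `C` of finite order,
hence diagonalizable. Its fixed points commute with all of `π G`, so they are scalars, and a
nonzero eigenvector of `α` has a `G`-stable kernel, so it is invertible. Mapping an invertible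
eigenvector to its eigenvalue is a homomorphism into a group of roots of unity whose kernel
consists of scalars; a group that is cyclic modulo a central subgroup is abelian, so the
eigenvectors of `α`, and hence all elements of `C`, commute.
-/

section FiniteOrderAutomorphism

variable {K A : Type*} [Field K] [Ring A] [Algebra K A]

theorem iSup_eigenspace_eq_top_of_pow_eq_one [IsAlgClosed K] [CharZero K] {V : Type*}
    [AddCommGroup V] [Module K V] [FiniteDimensional K V] {f : Module.End K V} {m : ℕ}
    (hm : m ≠ 0) (hf : f ^ m = 1) : ⨆ μ : K, f.eigenspace μ = ⊤ := by
  refine Module.End.IsSemisimple.iSup_eigenspace_eq_top ?_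
  refine Module.End.isSemisimple_of_squarefree_aeval_eq_zero
    (Polynomial.separable_X_pow_sub_C 1 (Nat.cast_ne_zero.2 hm) one_ne_zero).squarefree ?_
  simp [hf]

def eigenunits (α : A →ₐ[K] A) : Subgroup Aˣ where
  carrier := {x | ∃ μ : Kˣ, α x = (μ : K) • (x : A)}
  one_mem' := ⟨1, by simp⟩
  mul_mem' := by
    rintro x y ⟨μ, hx⟩ ⟨ν, hy⟩
    exact ⟨μ * ν, by simp [hx, hy, smul_smul, mul_comm]⟩
  inv_mem' := by
    rintro x ⟨μ, hx⟩
    refine ⟨μ⁻¹, ?_⟩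
    have h : α x * α ↑x⁻¹ = 1 := by rw [← map_mul, Units.mul_inv, map_one]
    calc α ↑x⁻¹ = ((μ⁻¹ : Kˣ) : K) • (↑x⁻¹ * (((μ : K) • (x : A)) * α ↑x⁻¹)) := by
          rw [smul_mul_assoc, mul_smul_comm, smul_smul]; simp
      _ = ((μ⁻¹ : Kˣ) : K) • (↑x⁻¹ : A) := by rw [← hx, h, mul_one]

theorem pow_apply_eq_pow_smul_of_apply_eq_smul (α : A →ₐ[K] A) {a : A} {μ : K}
    (ha : α a = μ • a) (n : ℕ) : (α ^ n) a = μ ^ n • a := by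
  induction n with
  | zero => simp
  | succ n ih => rw [pow_succ', AlgHom.mul_apply, ih, map_smul, ha, smul_smul, pow_succ]

theorem commute_of_mem_eigenunits [Nontrivial A] {α : A →ₐ[K] A} {m : ℕ} (hm : m ≠ 0)
    (hα : α ^ m = 1) (hfix : ∀ a, α a = a → a ∈ (⊥ : Subalgebra K A)) {x y : Aˣ}
    (hx : x ∈ eigenunits α) (hy : y ∈ eigenunits α) : Commute x y := by
  have eigenvalue_unique {x : Aˣ} {μ ν : K} (hμ : α x = μ • (x : A)) (hν : α x = ν • (x : A)) :
      μ = ν :=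
    smul_left_injective K x.ne_zero (hμ.symm.trans hν)
  have eigenvalue_pow {x : Aˣ} {μ : K} (hμ : α x = μ • (x : A)) : μ ^ m = 1 :=
    smul_left_injective K x.ne_zero <| show μ ^ m • (x : A) = (1 : K) • (x : A) by
      rw [← pow_apply_eq_pow_smul_of_apply_eq_smul α hμ, hα, one_smul]; rfl
  obtain ⟨ev, hev⟩ : ∃ ev : eigenunits α → Kˣ,
      ∀ x : eigenunits α, α ((x : Aˣ) : A) = (ev x : K) • (x : Aˣ) :=
    ⟨fun x => x.2.choose, fun x => x.2.choose_spec⟩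
  let χ : eigenunits α →* rootsOfUnity m K :=
    { toFun x := ⟨ev x, (mem_rootsOfUnity _ _).2 <| Units.ext <| by
        rw [Units.val_pow_eq_pow_val, Units.val_one]; exact eigenvalue_pow (hev x)⟩
      map_one' := Subtype.ext <| Units.ext <| eigenvalue_unique (hev 1) (by simp)
      map_mul' x y := Subtype.ext <| Units.ext <| eigenvalue_unique (hev (x * y)) (by
        simp [hev x, hev y, smul_smul, mul_comm]) }
  have hker : χ.ker ≤ Subgroup.center (eigenunits α) := by
    intro z hz
    have hz1 : ev z = 1 := congrArg Subtype.val hz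
    obtain ⟨c, hc⟩ := Algebra.mem_bot.1 (hfix _ (by rw [hev z, hz1, Units.val_one, one_smul]))
    refine Subgroup.mem_center_iff.2 fun w => Subtype.ext <| Units.ext ?_
    simp only [Subgroup.coe_mul, Units.val_mul, ← hc, Algebra.commutes]
  have : NeZero m := ⟨hm⟩
  exact congrArg Subtype.val <|
    (χ.isMulCommutative_of_isCyclic_of_ker_le_center hker).is_comm.comm ⟨x, hx⟩ ⟨y, hy⟩

theorem commute_of_pow_eq_one_of_fixed_mem_bot [IsAlgClosed K] [CharZero K]
    [FiniteDimensional K A] (α : A →ₐ[K] A) {m : ℕ} (hm : m ≠ 0) (hα : α ^ m = 1)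
    (hfix : ∀ a, α a = a → a ∈ (⊥ : Subalgebra K A))
    (hunit : ∀ a (μ : K), α a = μ • a → a ≠ 0 → IsUnit a) (a b : A) : Commute a b := by
  cases subsingleton_or_nontrivial A
  · exact Subsingleton.elim _ _
  have eigenvectors_commute {a b : A} {μ ν : K} (ha : α a = μ • a) (hb : α b = ν • b) :
      Commute a b := by
    rcases eq_or_ne a 0 with rfl | ha0
    · exact Commute.zero_left b
    rcases eq_or_ne b 0 with rfl | hb0
    · exact Commute.zero_right a
    have mem {c : A} {μ : K} (hc : α c = μ • c) (hc0 : c ≠ 0) :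
        (hunit c μ hc hc0).unit ∈ eigenunits α := by
      have hμ : μ ≠ 0 := by
        rintro rfl
        exact ((hunit c 0 hc hc0).map α).ne_zero (by rw [hc, zero_smul])
      exact ⟨Units.mk0 μ hμ, hc⟩
    exact commute_of_mem_eigenunits hm hα hfix (mem ha ha0) (mem hb hb0) |>.units_val
  have hspan : ⨆ μ : K, Module.End.eigenspace α.toLinearMap μ = ⊤ :=
    iSup_eigenspace_eq_top_of_pow_eq_one hm <| by
      ext a; simp [Module.End.pow_apply, ← AlgHom.coe_pow, hα]
  have mem_span (c : A) : c ∈ ⨆ μ : K, Module.End.eigenspace α.toLinearMap μ :=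
    hspan ▸ Submodule.mem_top
  refine Submodule.iSup_induction _ (motive := (Commute · b)) (mem_span a) (fun μ a ha => ?_)
    (Commute.zero_left b) fun a a' ha ha' => ha.add_left ha'
  refine Submodule.iSup_induction _ (motive := (Commute a ·)) (mem_span b) (fun ν b hb => ?_)
    (Commute.zero_right a) fun b b' hb hb' => hb.add_right hb'
  exact eigenvectors_commute (Module.End.mem_eigenspace_iff.1 ha)
    (Module.End.mem_eigenspace_iff.1 hb)

end FiniteOrderAutomorphism

theorem exists_forall_eq_pow_mul_of_isCyclic_quotient [Finite G] (K : Subgroup G) [K.Normal]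
    [IsCyclic (G ⧸ K)] : ∃ g₀ : G, ∀ g : G, ∃ n : ℕ, ∃ k ∈ K, g = g₀ ^ n * k := by
  obtain ⟨x, hx⟩ := IsCyclic.exists_monoid_generator (α := G ⧸ K)
  obtain ⟨g₀, rfl⟩ := QuotientGroup.mk_surjective x
  refine ⟨g₀, fun g => ?_⟩
  obtain ⟨n, hn⟩ := Submonoid.mem_powers_iff _ _ |>.1 (hx g)
  exact ⟨n, (g₀ ^ n)⁻¹ * g, QuotientGroup.eq.1 (by rw [QuotientGroup.mk_pow, hn]), by group⟩

section Commutant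

variable {k M V : Type*} [CommSemiring k] [Monoid M] [AddCommMonoid V] [Module k V]

def commutant (σ : Representation k M V) : Subalgebra k (Module.End k V) :=
  Subalgebra.centralizer k (Set.range σ)

theorem mem_commutant {σ : Representation k M V} {c : Module.End k V} :
    c ∈ commutant σ ↔ ∀ g, σ g * c = c * σ g := by
  simp [commutant, Subalgebra.mem_centralizer_iff]

theorem isUnit_of_isUnit_coe {σ : Representation k M V} {c : commutant σ}
    (hc : IsUnit (c : Module.End k V)) : IsUnit c := by
  obtain ⟨u, hu⟩ := hc
  have hinv : (↑u⁻¹ : Module.End k V) ∈ commutant σ := mem_commutant.2 fun g =>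
    (Commute.units_inv_right (hu ▸ mem_commutant.1 c.2 g : Commute (σ g) u)).eq
  refine ⟨⟨c, ⟨_, hinv⟩, Subtype.ext ?_, Subtype.ext ?_⟩, rfl⟩
  · change (c : Module.End k V) * ↑u⁻¹ = 1
    rw [← hu, u.mul_inv]
  · change ↑u⁻¹ * (c : Module.End k V) = 1
    rw [← hu, u.inv_mul]

end Commutant

section Schur

variable {V W : Type*} [AddCommGroup V] [Module ℂ V] [AddCommGroup W] [Module ℂ W]

theorem IsIrreducibleRep.isIrreducible {π : Representation ℂ G V} (hπ : IsIrreducibleRep π) :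
    π.IsIrreducible where
  exists_pair_ne := by
    obtain ⟨v, hv⟩ := hπ.1
    refine ⟨⊥, ⊤, fun h => hv ?_⟩
    have : v ∈ (⊥ : Subrepresentation π).toSubmodule := h ▸ Submodule.mem_top
    exact (Submodule.mem_bot ℂ).1 this
  eq_bot_or_eq_top U := (hπ.2 U.toSubmodule U.apply_mem_toSubmodule).imp
    (fun h => Subrepresentation.toSubmodule_injective h)
    (fun h => Subrepresentation.toSubmodule_injective h)

theorem IsIrreducibleRep.commutant_eq_bot [FiniteDimensional ℂ V] {π : Representation ℂ G V}
    (hπ : IsIrreducibleRep π) : commutant π = ⊥ := by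
  have := hπ.isIrreducible
  refine eq_bot_iff.2 fun c hc => ?_
  obtain ⟨μ, hμ⟩ :=
    Representation.IsIrreducible.algebraMap_intertwiningMap_bijective_of_isAlgClosed.2
      (c.intertwiningMap_of_isIntertwiningMap π π fun g v =>
        (LinearMap.congr_fun (mem_commutant.1 hc g) v).symm)
  refine Algebra.mem_bot.2 ⟨μ, ?_⟩
  ext v
  simpa using (LinearMap.congr_fun (congrArg Representation.IntertwiningMap.toLinearMap hμ) v)

theorem IsIrreducibleRep.injective_of_mem_equivariantHoms {ρ : Representation ℂ G W}
    (hρ : IsIrreducibleRep ρ) {σ : Representation ℂ G V} {f : W →ₗ[ℂ] V}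
    (hf : f ∈ equivariantHoms ρ σ) (hf0 : f ≠ 0) : Function.Injective f := by
  have := hρ.isIrreducible
  refine (Representation.IsIrreducible.injective_or_eq_zero
    (f.intertwiningMap_of_isIntertwiningMap ρ σ hf)).resolve_right fun h => hf0 ?_
  ext w
  exact congrArg (· w) h

theorem IsIrreducibleRep.commute_of_mem_center [FiniteDimensional ℂ V] {π : Representation ℂ G V}
    (hπ : IsIrreducibleRep π) {z : G} (hz : z ∈ Subgroup.center G) (c : Module.End ℂ V) :
    Commute (π z) c := by
  have hzG : π z ∈ commutant π := mem_commutant.2 fun g => by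
    rw [← map_mul, ← map_mul, Subgroup.mem_center_iff.1 hz g]
  obtain ⟨μ, hμ⟩ := Algebra.mem_bot.1 (hπ.commutant_eq_bot ▸ hzG)
  rw [← hμ]
  exact Algebra.commute_algebraMap_left μ c

theorem commutant_comp_subtype_le_sup_center [FiniteDimensional ℂ V] {π : Representation ℂ G V}
    (hπ : IsIrreducibleRep π) (H : Subgroup G) :
    commutant (π.comp H.subtype) ≤ commutant (π.comp (Subgroup.center G ⊔ H).subtype) := by
  intro c hc
  refine mem_commutant.2 fun ⟨k, hk⟩ => ?_
  rw [← SetLike.mem_coe, Subgroup.normal_mul] at hk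
  obtain ⟨z, hz, h, hh, rfl⟩ := hk
  simp only [MonoidHom.coe_comp, Subgroup.coe_subtype, Function.comp_apply, map_mul]
  exact ((hπ.commute_of_mem_center hz c).mul_left (mem_commutant.1 hc ⟨h, hh⟩)).eq

end Schur

section Multiplicity

variable {V W : Type*} [AddCommGroup V] [Module ℂ V] [AddCommGroup W] [Module ℂ W]

theorem exists_leftInverse_mem_equivariantHoms [Finite G] {ρ : Representation ℂ G W}
    {σ : Representation ℂ G V} {f : W →ₗ[ℂ] V} (hf : f ∈ equivariantHoms ρ σ)
    (hinj : Function.Injective f) : ∃ p ∈ equivariantHoms σ ρ, p ∘ₗ f = LinearMap.id := by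
  have := Fintype.ofFinite G
  obtain ⟨q, hq⟩ := f.exists_leftInverse_of_injective (LinearMap.ker_eq_bot.2 hinj)
  refine ⟨(Representation.linHom σ ρ).averageMap q,
    ((Representation.mem_linHom_invariants_iff_isIntertwining _).1
      ((Representation.linHom σ ρ).averageMap_invariant q)).isIntertwining, ?_⟩
  ext w
  have hqf (g : G) : ρ g (q (σ g⁻¹ (f w))) = w := by
    rw [← hf g⁻¹ w, ← LinearMap.comp_apply q f, hq, LinearMap.id_apply,
      Representation.self_inv_apply]
  simp [GroupAlgebra.average, map_sum, hqf, ← Nat.cast_smul_eq_nsmul ℂ, smul_smul]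

theorem comp_mem_commutant {ρ : Representation ℂ G W} {σ : Representation ℂ G V}
    {f : W →ₗ[ℂ] V} {p : V →ₗ[ℂ] W} (hf : f ∈ equivariantHoms ρ σ)
    (hp : p ∈ equivariantHoms σ ρ) : f ∘ₗ p ∈ commutant σ :=
  mem_commutant.2 fun g => LinearMap.ext fun v => by simp [hp g v, hf g (p v)]

theorem finrank_equivariantHoms_le_one [Finite G] [FiniteDimensional ℂ W]
    {ρ : Representation ℂ G W} (hρ : IsIrreducibleRep ρ) {σ : Representation ℂ G V}
    (hσ : ∀ a ∈ commutant σ, ∀ b ∈ commutant σ, Commute a b) :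
    Module.finrank ℂ (equivariantHoms ρ σ) ≤ 1 := by
  rcases eq_or_ne (equivariantHoms ρ σ) ⊥ with h | h
  · rw [h, finrank_bot]; exact zero_le_one
  obtain ⟨f₁, hf₁, hf₁0⟩ := Submodule.exists_mem_ne_zero_of_ne_bot h
  obtain ⟨p, hp, hpf₁⟩ := exists_leftInverse_mem_equivariantHoms hf₁
    (hρ.injective_of_mem_equivariantHoms hf₁ hf₁0)
  refine finrank_le_one ⟨f₁, hf₁⟩ fun ⟨f₂, hf₂⟩ => ?_
  obtain ⟨μ, hμ⟩ : ∃ μ : ℂ, algebraMap ℂ _ μ = p ∘ₗ f₂ :=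
    Algebra.mem_bot.1 (hρ.commutant_eq_bot ▸ comp_mem_commutant hp hf₂)
  have hcomm : (f₁ ∘ₗ p) ∘ₗ (f₂ ∘ₗ p) = (f₂ ∘ₗ p) ∘ₗ (f₁ ∘ₗ p) :=
    hσ _ (comp_mem_commutant hf₁ hp) _ (comp_mem_commutant hf₂ hp)
  refine ⟨μ, Subtype.ext ?_⟩
  calc μ • f₁ = f₁ ∘ₗ (p ∘ₗ f₂) := by rw [← hμ]; ext; simp
    _ = (f₁ ∘ₗ p) ∘ₗ (f₂ ∘ₗ p) ∘ₗ f₁ := by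
      simp only [LinearMap.comp_assoc, hpf₁, LinearMap.comp_id]
    _ = (f₂ ∘ₗ p) ∘ₗ (f₁ ∘ₗ p) ∘ₗ f₁ := by
      rw [← LinearMap.comp_assoc, hcomm, LinearMap.comp_assoc]
    _ = f₂ := by simp only [LinearMap.comp_assoc, hpf₁, LinearMap.comp_id]

end Multiplicity

section CyclicQuotient

variable {V : Type*} [AddCommGroup V] [Module ℂ V]

theorem conj_mem_commutant_comp_subtype (π : Representation ℂ G V) {K : Subgroup G} [K.Normal]
    (g : G) {c : Module.End ℂ V} (hc : c ∈ commutant (π.comp K.subtype)) :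
    π g * c * π g⁻¹ ∈ commutant (π.comp K.subtype) := by
  refine mem_commutant.2 fun k => LinearMap.ext fun v => ?_
  have hk : g⁻¹ * k * g ∈ K := by simpa using ‹K.Normal›.conj_mem _ k.2 g⁻¹
  have hck := LinearMap.congr_fun (mem_commutant.1 hc ⟨_, hk⟩) (π g⁻¹ v)
  simp only [MonoidHom.coe_comp, Subgroup.coe_subtype, Function.comp_apply, map_mul,
    Module.End.mul_apply, Representation.self_inv_apply] at hck ⊢
  simpa using congrArg (π g) hck

def conjAction (π : Representation ℂ G V) (K : Subgroup G) [K.Normal] :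
    G →* (commutant (π.comp K.subtype) →ₐ[ℂ] commutant (π.comp K.subtype)) where
  toFun g :=
    { toFun c := ⟨π g * c * π g⁻¹, conj_mem_commutant_comp_subtype π g c.2⟩
      map_one' := by ext1; simp [← map_mul]
      map_mul' a b := by ext1; ext v; simp
      map_zero' := by ext1; simp
      map_add' a b := by ext1; simp [mul_add, add_mul]
      commutes' r := by ext1; ext v; simp }
  map_one' := by ext; simp
  map_mul' g h := by ext; simp [mul_assoc]

theorem conjAction_apply_coe (π : Representation ℂ G V) (K : Subgroup G) [K.Normal] (g : G)
    (c : commutant (π.comp K.subtype)) : (conjAction π K g c : Module.End ℂ V) = π g * c * π g⁻¹ :=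
  rfl

variable [FiniteDimensional ℂ V] {π : Representation ℂ G V} {K : Subgroup G} [K.Normal] {g₀ : G}

theorem mem_bot_of_conjAction_apply_eq (hπ : IsIrreducibleRep π)
    (hgen : ∀ g : G, ∃ n : ℕ, ∃ k ∈ K, g = g₀ ^ n * k) {c : commutant (π.comp K.subtype)}
    (hc : conjAction π K g₀⁻¹ c = c) : c ∈ (⊥ : Subalgebra ℂ (commutant (π.comp K.subtype))) := by
  have hg₀ : Commute (π g₀) c := LinearMap.ext fun v => by
    have h := LinearMap.congr_fun (congrArg Subtype.val hc) v
    rw [conjAction_apply_coe, inv_inv] at h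
    simpa using congrArg (π g₀) h.symm
  have hG : (c : Module.End ℂ V) ∈ commutant π := mem_commutant.2 fun g => by
    obtain ⟨n, k, hk, rfl⟩ := hgen g
    rw [map_mul, map_pow]
    exact ((hg₀.pow_left n).mul_left (mem_commutant.1 c.2 ⟨k, hk⟩)).eq
  obtain ⟨μ, hμ⟩ := Algebra.mem_bot.1 (hπ.commutant_eq_bot ▸ hG)
  exact Algebra.mem_bot.2 ⟨μ, Subtype.ext hμ⟩

theorem isUnit_of_conjAction_apply_eq_smul (hπ : IsIrreducibleRep π)
    (hgen : ∀ g : G, ∃ n : ℕ, ∃ k ∈ K, g = g₀ ^ n * k) {c : commutant (π.comp K.subtype)}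
    {μ : ℂ} (hc : conjAction π K g₀⁻¹ c = μ • c) (hc0 : c ≠ 0) : IsUnit c := by
  set U := LinearMap.ker (c : Module.End ℂ V)
  have hg₀ (v : V) (hv : v ∈ U) : π g₀ v ∈ U := by
    have h := LinearMap.congr_fun (congrArg Subtype.val hc) v
    rw [conjAction_apply_coe, inv_inv] at h
    simpa [U, LinearMap.mem_ker.1 hv] using congrArg (π g₀) h
  have hK (k : K) (v : V) (hv : v ∈ U) : π k v ∈ U := by
    have := LinearMap.congr_fun (mem_commutant.1 c.2 k) v
    simp_all [U]
  have hpow (n : ℕ) (v : V) (hv : v ∈ U) : π (g₀ ^ n) v ∈ U := by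
    induction n with
    | zero => simpa using hv
    | succ n ih => rw [pow_succ', map_mul, Module.End.mul_apply]; exact hg₀ _ ih
  have hinv (g : G) (v : V) (hv : v ∈ U) : π g v ∈ U := by
    obtain ⟨n, k, hk, rfl⟩ := hgen g
    rw [map_mul, Module.End.mul_apply]
    exact hpow n _ (hK ⟨k, hk⟩ v hv)
  refine isUnit_of_isUnit_coe ((Module.End.isUnit_iff _).2 ?_)
  have hinj : Function.Injective (c : Module.End ℂ V) :=
    LinearMap.ker_eq_bot.1 <| (hπ.2 U hinv).resolve_right fun h =>
      hc0 (Subtype.ext (LinearMap.ker_eq_top.1 h))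
  exact ⟨hinj, LinearMap.injective_iff_surjective.1 hinj⟩

theorem commute_of_mem_commutant_of_isCyclic_quotient [Finite G] (hπ : IsIrreducibleRep π)
    [IsCyclic (G ⧸ K)] {a b : Module.End ℂ V} (ha : a ∈ commutant (π.comp K.subtype))
    (hb : b ∈ commutant (π.comp K.subtype)) : Commute a b := by
  obtain ⟨g₀, hgen⟩ := exists_forall_eq_pow_mul_of_isCyclic_quotient K
  -- conjugating by `π g₀⁻¹` rather than `π g₀` makes the kernels of eigenvectors `π g₀`-stable
  have := commute_of_pow_eq_one_of_fixed_mem_bot (conjAction π K g₀⁻¹)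
    (orderOf_pos g₀⁻¹).ne' (by rw [← map_pow, pow_orderOf_eq_one, map_one])
    (fun _ => mem_bot_of_conjAction_apply_eq hπ hgen)
    (fun _ _ => isUnit_of_conjAction_apply_eq_smul hπ hgen) ⟨a, ha⟩ ⟨b, hb⟩
  exact congrArg Subtype.val this

end CyclicQuotient

/-- Let `G` be a finite group, `H` a subgroup, and `K = Z(G)⬝H` the
subgroup generated by the center of `G` together with `H`.  If `K` is normal in `G` and
`G/K` is cyclic, then every irreducible complex representation of `G` restricts to `H`
without multiplicity. -/
theorem multiplicity_free_of_center_mul_cyclic_quotient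
    {G : Type*} [Group G] [Finite G] (H : Subgroup G)
    [hK : (Subgroup.center G ⊔ H).Normal]
    (hcyc : IsCyclic (G ⧸ (Subgroup.center G ⊔ H)))
    {V W : Type*}
    [AddCommGroup V] [Module ℂ V] [FiniteDimensional ℂ V]
    [AddCommGroup W] [Module ℂ W] [FiniteDimensional ℂ W]
    (π : Representation ℂ G V) (hπ : IsIrreducibleRep π)
    (ρ : Representation ℂ H W) (hρ : IsIrreducibleRep ρ) :
    Module.finrank ℂ (equivariantHoms ρ (π.comp H.subtype)) ≤ 1 := by
  refine finrank_equivariantHoms_le_one hρ fun a ha b hb => ?_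
  exact commute_of_mem_commutant_of_isCyclic_quotient (K := Subgroup.center G ⊔ H) hπ
    (commutant_comp_subtype_le_sup_center hπ H ha) (commutant_comp_subtype_le_sup_center hπ H hb)

end RestrictionMult
end
end

section
/- Let G be a finite group and N a normal subgroup with G/N isomorphic to (ℤ/2ℤ) × (ℤ/2ℤ). Let ω₁ and ω₂ be two distinct nontrivial homomorphisms G → ℂˣ trivial on N, and let π be an irreducible finite-dimensional complex representation of G with π ≅ π ⊗ ω₁ and π ≅ π ⊗ ω₂. Then exactly one of the following holds: Res_N π is a direct sum of four pairwise non-isomorphic irreducible representations of N, or Res_N π ≅ ρ ⊕ ρ for a single irreducible representation ρ of N. -/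
noncomputable section

namespace RestrictionMult

variable {G : Type*} [Group G]

/-- `π` decomposes as a direct sum of four pairwise non-isomorphic irreducible
subrepresentations. -/
def DecomposesAsFourDistinctIrreds {H : Type*} [Group H] {V : Type*}
    [AddCommGroup V] [Module ℂ V] (π : Representation ℂ H V) : Prop :=
  ∃ (U : Fin 4 → Submodule ℂ V) (hU : ∀ i g, ∀ v ∈ U i, π g v ∈ U i),
    iSupIndep U ∧ (⨆ i, U i) = ⊤ ∧
      (∀ i, IsIrreducibleRep (resSub π (U i) (hU i))) ∧
      ∀ i j, i ≠ j → ¬ IsRepEquiv (resSub π (U i) (hU i)) (resSub π (U j) (hU j))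

/-- `π` decomposes as a direct sum `ρ ⊕ ρ` of two isomorphic irreducible
subrepresentations. -/
def DecomposesAsTwiceIrred {H : Type*} [Group H] {V : Type*}
    [AddCommGroup V] [Module ℂ V] (π : Representation ℂ H V) : Prop :=
  ∃ (U₁ U₂ : Submodule ℂ V) (h₁ : ∀ g, ∀ v ∈ U₁, π g v ∈ U₁)
    (h₂ : ∀ g, ∀ v ∈ U₂, π g v ∈ U₂),
    U₁ ⊓ U₂ = ⊥ ∧ U₁ ⊔ U₂ = ⊤ ∧
      IsIrreducibleRep (resSub π U₁ h₁) ∧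
      IsRepEquiv (resSub π U₁ h₁) (resSub π U₂ h₂)

/-!
The commutant `End_N(V)` of `Res_N π` is four-dimensional. Conjugation by `G` acts on it
through `G/N ≅ (ℤ/2)²`, so it splits into the joint eigenspaces of the conjugations by two lifts
`g₁, g₂` of generators of `G/N`; the eigenspace belonging to a character `χ` of `G/N` is
`Hom_G(π ⊗ χ, π)`, which is a line by Schur's lemma since `π ⊗ χ ≅ π` for each of the four
characters `1, ω₁, ω₂, ω₁ω₂`.

On the other hand, if `Res_N π = ⊕ᵢ Uᵢ` with irreducible `Uᵢ` (Maschke), then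
`dim End_N(V) = ∑ᵢⱼ dim Hom_N(Uᵢ, Uⱼ) = #{(i, j) | Uᵢ ≅ Uⱼ}`, and this count is `4` only for four
pairwise non-isomorphic summands or for two isomorphic ones. The two cases exclude each other
because every irreducible subrepresentation of `ρ ⊕ ρ` is isomorphic to `ρ`.
-/

section Basic

variable {H : Type*} [Group H] {V W X : Type*} [AddCommGroup V] [Module ℂ V]
  [AddCommGroup W] [Module ℂ W] [AddCommGroup X] [Module ℂ X]

@[simp] lemma twist_apply {π : Representation ℂ H V} {χ : H →* ℂˣ} (g : H) (v : V) :
    twist π χ g v = (χ g : ℂ) • π g v := rfl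

lemma IsRepEquiv.refl (π : Representation ℂ H V) : IsRepEquiv π π :=
  ⟨LinearEquiv.refl ℂ V, fun _ _ => rfl⟩

lemma IsRepEquiv.symm {π : Representation ℂ H V} {σ : Representation ℂ H W}
    (h : IsRepEquiv π σ) : IsRepEquiv σ π := by
  obtain ⟨e, he⟩ := h
  exact ⟨e.symm, fun g w => e.injective (by simp [he])⟩

lemma IsRepEquiv.trans {π : Representation ℂ H V} {σ : Representation ℂ H W}
    {τ : Representation ℂ H X} (h₁ : IsRepEquiv π σ) (h₂ : IsRepEquiv σ τ) :
    IsRepEquiv π τ := by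
  obtain ⟨e₁, he₁⟩ := h₁
  obtain ⟨e₂, he₂⟩ := h₂
  exact ⟨e₁.trans e₂, fun g v => by simp [he₁, he₂]⟩

lemma IsRepEquiv.twist_mul {π : Representation ℂ H V} {χ₁ χ₂ : H →* ℂˣ}
    (h₁ : IsRepEquiv π (twist π χ₁)) (h₂ : IsRepEquiv π (twist π χ₂)) :
    IsRepEquiv π (twist π (χ₁ * χ₂)) := by
  obtain ⟨e₁, he₁⟩ := h₁
  obtain ⟨e₂, he₂⟩ := h₂
  exact ⟨e₁.trans e₂, fun g v => by simp [he₁, he₂, mul_smul]⟩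

lemma IsIrreducibleRep.of_isRepEquiv {π : Representation ℂ H V} {σ : Representation ℂ H W}
    (hπ : IsIrreducibleRep π) (he : IsRepEquiv π σ) : IsIrreducibleRep σ := by
  obtain ⟨e, he⟩ := he
  obtain ⟨⟨v, hv⟩, hinv⟩ := hπ
  refine ⟨⟨e v, by simpa using hv⟩, fun U hU => ?_⟩
  have hcomap : ∀ g, ∀ v ∈ U.comap (e : V →ₗ[ℂ] W), π g v ∈ U.comap (e : V →ₗ[ℂ] W) := by
    intro g v hv
    simpa [he] using hU g _ hv
  have hU' : U = (U.comap (e : V →ₗ[ℂ] W)).map (e : V →ₗ[ℂ] W) :=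
    (Submodule.map_comap_eq_of_surjective e.surjective U).symm
  refine (hinv _ hcomap).imp (fun h => ?_) (fun h => ?_)
  · rw [hU', h, Submodule.map_bot]
  · rw [hU', h, Submodule.map_top, LinearEquiv.range]

end Basic

section Schur

variable {H : Type*} [Group H] {V W : Type*} [AddCommGroup V] [Module ℂ V]
  [AddCommGroup W] [Module ℂ W] {π : Representation ℂ H V} {σ : Representation ℂ H W}

lemma eq_zero_or_bijective_of_mem_equivariantHoms (hπ : IsIrreducibleRep π)
    (hσ : IsIrreducibleRep σ) {f : V →ₗ[ℂ] W} (hf : f ∈ equivariantHoms π σ) :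
    f = 0 ∨ Function.Bijective f := by
  have hker : ∀ g, ∀ v ∈ LinearMap.ker f, π g v ∈ LinearMap.ker f := by
    intro g v hv
    rw [LinearMap.mem_ker] at hv ⊢
    rw [hf, hv, map_zero]
  have hrange : ∀ g, ∀ w ∈ LinearMap.range f, σ g w ∈ LinearMap.range f := by
    rintro g w ⟨v, rfl⟩
    exact ⟨π g v, hf g v⟩
  rcases hπ.2 _ hker with hker | hker
  · rcases hσ.2 _ hrange with hrange | hrange
    · exact Or.inl (LinearMap.range_eq_bot.mp hrange)
    · exact Or.inr ⟨LinearMap.ker_eq_bot.mp hker, LinearMap.range_eq_top.mp hrange⟩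
  · exact Or.inl (LinearMap.ker_eq_top.mp hker)

lemma isRepEquiv_of_mem_equivariantHoms (hπ : IsIrreducibleRep π) (hσ : IsIrreducibleRep σ)
    {f : V →ₗ[ℂ] W} (hf : f ∈ equivariantHoms π σ) (hf0 : f ≠ 0) : IsRepEquiv π σ :=
  ⟨LinearEquiv.ofBijective f ((eq_zero_or_bijective_of_mem_equivariantHoms hπ hσ hf).resolve_left
    hf0), hf⟩

lemma exists_eq_smul_id_of_mem_equivariantHoms [FiniteDimensional ℂ V]
    (hπ : IsIrreducibleRep π) {f : V →ₗ[ℂ] V} (hf : f ∈ equivariantHoms π π) :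
    ∃ c : ℂ, f = c • LinearMap.id := by
  have : Nontrivial V := let ⟨v, hv⟩ := hπ.1; ⟨⟨v, 0, hv⟩⟩
  obtain ⟨c, hc⟩ := Module.End.exists_eigenvalue f
  obtain ⟨v, hv⟩ := hc.exists_hasEigenvector
  have hmem : f - c • LinearMap.id ∈ equivariantHoms π π :=
    sub_mem hf (Submodule.smul_mem _ _ fun _ _ => rfl)
  refine ⟨c, sub_eq_zero.mp ((eq_zero_or_bijective_of_mem_equivariantHoms hπ hπ hmem).resolve_right
    fun hbij => hv.2 (hbij.1 ?_))⟩
  simp [hv.apply_eq_smul]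

lemma finrank_equivariantHoms_of_isRepEquiv [FiniteDimensional ℂ W] (hσ : IsIrreducibleRep σ)
    (he : IsRepEquiv π σ) : Module.finrank ℂ (equivariantHoms π σ) = 1 := by
  obtain ⟨e, he⟩ := he
  have hspan : equivariantHoms π σ = ℂ ∙ (e : V →ₗ[ℂ] W) := by
    refine le_antisymm (fun f hf => ?_) ((Submodule.span_singleton_le_iff_mem _ _).mpr he)
    have hcomp : f ∘ₗ (e.symm : W →ₗ[ℂ] V) ∈ equivariantHoms σ σ := by
      intro g w
      have hsymm : e.symm (σ g w) = π g (e.symm w) :=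
        e.symm_apply_eq.mpr (by rw [he, e.apply_symm_apply])
      simpa [hsymm] using hf g (e.symm w)
    obtain ⟨c, hc⟩ := exists_eq_smul_id_of_mem_equivariantHoms hσ hcomp
    refine Submodule.mem_span_singleton.mpr ⟨c, LinearMap.ext fun v => ?_⟩
    simpa using (LinearMap.congr_fun hc (e v)).symm
  obtain ⟨w, hw⟩ := hσ.1
  rw [hspan, finrank_span_singleton]
  intro h0
  exact hw (by simpa using LinearMap.congr_fun h0 (e.symm w))

open Classical in
lemma finrank_equivariantHoms_of_irreducible [FiniteDimensional ℂ W] (hπ : IsIrreducibleRep π)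
    (hσ : IsIrreducibleRep σ) :
    Module.finrank ℂ (equivariantHoms π σ) = if IsRepEquiv π σ then 1 else 0 := by
  split_ifs with he
  · exact finrank_equivariantHoms_of_isRepEquiv hσ he
  · have hbot : equivariantHoms π σ = ⊥ := eq_bot_iff.mpr fun f hf => (Submodule.mem_bot ℂ).mpr
      (by_contra fun hf0 => he (isRepEquiv_of_mem_equivariantHoms hπ hσ hf hf0))
    rw [hbot, finrank_bot]

end Schur

lemma iSup_fin_cons {α : Type*} [CompleteLattice α] {k : ℕ} (a : α) (f : Fin k → α) :
    ⨆ i, (Fin.cons a f : Fin (k + 1) → α) i = a ⊔ ⨆ i, f i :=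
  le_antisymm (iSup_le fun i => i.cases le_sup_left fun j => le_sup_of_le_right (le_iSup f j))
    (sup_le (le_iSup_of_le 0 le_rfl) (iSup_le fun j => le_iSup_of_le j.succ le_rfl))

lemma iSupIndep.fin_cons {α : Type*} [CompleteLattice α] [IsModularLattice α] {k : ℕ} {a : α}
    {f : Fin k → α} (hf : iSupIndep f) (ha : Disjoint a (⨆ i, f i)) :
    iSupIndep (Fin.cons a f : Fin (k + 1) → α) := by
  intro i
  cases i using Fin.cases with
  | zero =>
    refine ha.mono_right (iSup₂_le fun j hj => ?_)
    obtain ⟨j, rfl⟩ := Fin.exists_succ_eq.mpr hj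
    exact le_iSup_of_le j le_rfl
  | succ i =>
    have hle : ⨆ (j) (_ : j ≠ i.succ), (Fin.cons a f : Fin (k + 1) → α) j ≤
        (⨆ (j) (_ : j ≠ i), f j) ⊔ a := by
      refine iSup₂_le fun j hj => ?_
      cases j using Fin.cases with
      | zero => exact le_sup_right
      | succ j => exact le_sup_of_le_left (le_iSup₂_of_le j (fun h => hj (h ▸ rfl)) le_rfl)
    refine Disjoint.mono_right hle ((hf i).disjoint_sup_right_of_disjoint_sup_left ?_)
    exact ha.symm.mono_left (sup_le (le_iSup f i) (iSup₂_le fun j _ => le_iSup f j))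

section Decomposition

variable {H : Type*} [Group H] {V : Type*} [AddCommGroup V] [Module ℂ V]
  (π : Representation ℂ H V)

lemma exists_invariant_isCompl [Finite H] (U : Submodule ℂ V) (hU : ∀ g, ∀ v ∈ U, π g v ∈ U) :
    ∃ Q : Submodule ℂ V, (∀ g, ∀ v ∈ Q, π g v ∈ Q) ∧ IsCompl U Q := by
  obtain ⟨Q, hQ⟩ := exists_isCompl (⟨U, hU⟩ : Subrepresentation π)
  refine ⟨Q.toSubmodule, Q.apply_mem_toSubmodule, ?_, ?_⟩
  · exact disjoint_iff.mpr (congrArg Subrepresentation.toSubmodule hQ.inf_eq_bot)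
  · exact codisjoint_iff.mpr (congrArg Subrepresentation.toSubmodule hQ.sup_eq_top)

lemma isIrreducibleRep_resSub_of_minimal {U : Submodule ℂ V} (hU : ∀ g, ∀ v ∈ U, π g v ∈ U)
    (hU0 : U ≠ ⊥)
    (hmin : ∀ U' ≤ U, (∀ g, ∀ v ∈ U', π g v ∈ U') → U' = ⊥ ∨ U' = U) :
    IsIrreducibleRep (resSub π U hU) := by
  obtain ⟨v, hv, hv0⟩ := Submodule.exists_mem_ne_zero_of_ne_bot hU0
  refine ⟨⟨⟨v, hv⟩, by simpa using hv0⟩, fun S hS => ?_⟩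
  have hmap : ∀ g, ∀ v ∈ S.map U.subtype, π g v ∈ S.map U.subtype := by
    rintro g _ ⟨x, hx, rfl⟩
    exact ⟨resSub π U hU g x, hS g x hx, rfl⟩
  have hinj := Submodule.map_injective_of_injective U.injective_subtype
  refine (hmin _ (Submodule.map_subtype_le U S) hmap).imp (fun h => hinj ?_) (fun h => hinj ?_)
  · rw [h, Submodule.map_bot]
  · rw [h, Submodule.map_subtype_top]

variable [FiniteDimensional ℂ V]

lemma exists_irreducible_le {W : Submodule ℂ V} (hW : ∀ g, ∀ v ∈ W, π g v ∈ W) (hW0 : W ≠ ⊥) :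
    ∃ U ≤ W, ∃ hU : ∀ g, ∀ v ∈ U, π g v ∈ U, IsIrreducibleRep (resSub π U hU) := by
  obtain ⟨U, ⟨hU, hU0, hUW⟩, hmin⟩ := wellFounded_lt.has_min
    {U : Submodule ℂ V | (∀ g, ∀ v ∈ U, π g v ∈ U) ∧ U ≠ ⊥ ∧ U ≤ W} ⟨W, hW, hW0, le_rfl⟩
  refine ⟨U, hUW, hU, isIrreducibleRep_resSub_of_minimal π hU hU0 fun U' hU'U hU' => ?_⟩
  by_cases hU'0 : U' = ⊥
  · exact Or.inl hU'0
  · exact Or.inr (hU'U.eq_of_not_lt (hmin U' ⟨hU', hU'0, hU'U.trans hUW⟩))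

lemma exists_irreducible_decomposition [Finite H] (W : Submodule ℂ V)
    (hW : ∀ g, ∀ v ∈ W, π g v ∈ W) :
    ∃ (k : ℕ) (U : Fin k → Submodule ℂ V) (hU : ∀ i, ∀ g, ∀ v ∈ U i, π g v ∈ U i),
      iSupIndep U ∧ ⨆ i, U i = W ∧ ∀ i, IsIrreducibleRep (resSub π (U i) (hU i)) := by
  induction W using WellFoundedLT.induction with
  | _ W ih =>
    by_cases hW0 : W = ⊥
    · exact ⟨0, Fin.elim0, fun i => i.elim0, iSupIndep_subsingleton _, by simp [hW0],
        fun i => i.elim0⟩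
    obtain ⟨U₀, hU₀W, hU₀, hirr₀⟩ := exists_irreducible_le π hW hW0
    obtain ⟨Q, hQ, hU₀Q⟩ := exists_invariant_isCompl π U₀ hU₀
    have hT : ∀ g, ∀ v ∈ W ⊓ Q, π g v ∈ W ⊓ Q := fun g v hv => ⟨hW g v hv.1, hQ g v hv.2⟩
    have hU₀T : Disjoint U₀ (W ⊓ Q) := hU₀Q.disjoint.mono_right inf_le_right
    have hsup : U₀ ⊔ W ⊓ Q = W := by
      rw [inf_comm, ← sup_inf_assoc_of_le Q hU₀W, hU₀Q.sup_eq_top, top_inf_eq]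
    have hlt : W ⊓ Q < W := by
      refine inf_le_left.lt_of_ne fun h => ?_
      obtain ⟨⟨v, hv⟩, hv0⟩ := hirr₀.1
      exact hv0 (Subtype.ext (hU₀T.le_bot ⟨hv, by rw [h]; exact hU₀W hv⟩))
    obtain ⟨k, U, hU, hind, hsupU, hirr⟩ := ih _ hlt hT
    refine ⟨k + 1, Fin.cons U₀ U, fun i => Fin.cases hU₀ hU i,
      iSupIndep.fin_cons hind (hsupU ▸ hU₀T), ?_, fun i => Fin.cases hirr₀ hirr i⟩
    rw [iSup_fin_cons, hsupU, hsup]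

end Decomposition

section Intertwiners

variable {H : Type*} [Group H] {V W X : Type*} [AddCommGroup V] [Module ℂ V]
  [AddCommGroup W] [Module ℂ W] [AddCommGroup X] [Module ℂ X]
  {π : Representation ℂ H V}

lemma comp_mem_equivariantHoms {ρ : Representation ℂ H W} {σ : Representation ℂ H X}
    {f : V →ₗ[ℂ] W} {f' : W →ₗ[ℂ] X} (hf : f ∈ equivariantHoms π ρ)
    (hf' : f' ∈ equivariantHoms ρ σ) : f' ∘ₗ f ∈ equivariantHoms π σ := fun g v => by
  simp [hf g v, hf' g (f v)]

lemma subtype_mem_equivariantHoms {U : Submodule ℂ V} (hU : ∀ g, ∀ v ∈ U, π g v ∈ U) :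
    U.subtype ∈ equivariantHoms (resSub π U hU) π := fun _ _ => rfl

end Intertwiners

section InternalDirectSum

variable {H : Type*} [Group H] {V : Type*} [AddCommGroup V] [Module ℂ V]
  {π : Representation ℂ H V} {ι : Type*} [DecidableEq ι] {U : ι → Submodule ℂ V}
  (hint : DirectSum.IsInternal U)

def internalProj (i : ι) : V →ₗ[ℂ] U i :=
  DirectSum.component ℂ ι (fun i => U i) i ∘ₗ
    (LinearEquiv.ofBijective (DirectSum.coeLinearMap U) hint).symm.toLinearMap

lemma internalProj_coe {i : ι} (x : U i) : internalProj hint i x = x :=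
  hint.ofBijective_coeLinearMap_same x

lemma internalProj_coe_of_ne {i j : ι} (hij : i ≠ j) (x : U i) : internalProj hint j x = 0 :=
  hint.ofBijective_coeLinearMap_of_ne hij x

variable [Fintype ι]

lemma sum_internalProj (v : V) : ∑ i, (internalProj hint i v : V) = v := by
  set e := LinearEquiv.ofBijective (DirectSum.coeLinearMap U) hint
  have h := congrArg (DirectSum.coeLinearMap U) (DirectSum.sum_univ_of (e.symm v))
  rw [map_sum] at h
  simp only [DirectSum.coeLinearMap_of] at h
  exact h.trans (e.apply_symm_apply v)

lemma internalProj_apply_equivariant (hU : ∀ i, ∀ g, ∀ v ∈ U i, π g v ∈ U i) (i : ι) (g : H)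
    (v : V) : (internalProj hint i (π g v) : V) = π g (internalProj hint i v) := by
  conv_lhs => rw [← sum_internalProj hint v, map_sum, map_sum, Submodule.coe_sum]
  rw [Finset.sum_eq_single i]
  · exact congrArg Subtype.val (internalProj_coe hint ⟨_, hU i g _ (internalProj hint i v).2⟩)
  · intro j _ hji
    exact congrArg Subtype.val
      (internalProj_coe_of_ne hint hji ⟨_, hU j g _ (internalProj hint j v).2⟩)
  · simp

lemma internalProj_mem_equivariantHoms (hU : ∀ i, ∀ g, ∀ v ∈ U i, π g v ∈ U i) (i : ι) :
    internalProj hint i ∈ equivariantHoms π (resSub π (U i) (hU i)) := fun g v =>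
  Subtype.ext (internalProj_apply_equivariant hint hU i g v)

variable (hU : ∀ i, ∀ g, ∀ v ∈ U i, π g v ∈ U i)

def equivariantHomsEquivPi :
    equivariantHoms π π ≃ₗ[ℂ]
      Π i j, equivariantHoms (resSub π (U i) (hU i)) (resSub π (U j) (hU j)) where
  toFun f i j := ⟨internalProj hint j ∘ₗ (f : V →ₗ[ℂ] V) ∘ₗ (U i).subtype,
    comp_mem_equivariantHoms (comp_mem_equivariantHoms (subtype_mem_equivariantHoms (hU i)) f.2)
      (internalProj_mem_equivariantHoms hint hU j)⟩
  map_add' f f' := by ext; simp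
  map_smul' c f := by ext; simp
  invFun F := ⟨∑ i, ∑ j, (U j).subtype ∘ₗ (F i j : U i →ₗ[ℂ] U j) ∘ₗ internalProj hint i,
    sum_mem fun i _ => sum_mem fun j _ => comp_mem_equivariantHoms
      (comp_mem_equivariantHoms (internalProj_mem_equivariantHoms hint hU i) (F i j).2)
      (subtype_mem_equivariantHoms (hU j))⟩
  left_inv f := by
    ext v
    simp only [LinearMap.sum_apply, LinearMap.comp_apply, Submodule.subtype_apply,
      sum_internalProj]
    rw [← map_sum, sum_internalProj]
  right_inv F := by
    ext i j x
    simp only [LinearMap.sum_apply, LinearMap.comp_apply, Submodule.subtype_apply]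
    rw [Finset.sum_eq_single i (fun i' _ hi' => by simp [internalProj_coe_of_ne hint hi'.symm x])
      (by simp), internalProj_coe, map_sum, Submodule.coe_sum, Finset.sum_eq_single j
      (fun j' _ hj' => by simp [internalProj_coe_of_ne hint hj']) (by simp), internalProj_coe]

lemma finrank_equivariantHoms_eq_sum [FiniteDimensional ℂ V] (hind : iSupIndep U)
    (hsup : ⨆ i, U i = ⊤) :
    Module.finrank ℂ (equivariantHoms π π) =
      ∑ i, ∑ j, Module.finrank ℂ
        (equivariantHoms (resSub π (U i) (hU i)) (resSub π (U j) (hU j))) := by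
  have hint := DirectSum.isInternal_submodule_of_iSupIndep_of_iSup_eq_top hind hsup
  simp [(equivariantHomsEquivPi hint hU).finrank_eq, Module.finrank_pi_fintype]

lemma exists_isRepEquiv_of_iSupIndep (hind : iSupIndep U) (hsup : ⨆ i, U i = ⊤)
    (hirr : ∀ i, IsIrreducibleRep (resSub π (U i) (hU i)))
    {W : Submodule ℂ V} (hW : ∀ g, ∀ v ∈ W, π g v ∈ W) (hWirr : IsIrreducibleRep (resSub π W hW)) :
    ∃ i, IsRepEquiv (resSub π W hW) (resSub π (U i) (hU i)) := by
  have hint := DirectSum.isInternal_submodule_of_iSupIndep_of_iSup_eq_top hind hsup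
  by_contra! h
  have hzero : ∀ i, internalProj hint i ∘ₗ W.subtype = 0 := fun i => by_contra fun h0 =>
    h i (isRepEquiv_of_mem_equivariantHoms hWirr (hirr i) (comp_mem_equivariantHoms
      (subtype_mem_equivariantHoms hW) (internalProj_mem_equivariantHoms hint hU i)) h0)
  obtain ⟨w, hw⟩ := hWirr.1
  refine hw (Subtype.ext ?_)
  rw [← sum_internalProj hint (w : V)]
  exact Finset.sum_eq_zero fun i _ => by simpa using LinearMap.congr_fun (hzero i) w

end InternalDirectSum

lemma eq_four_or_eq_two_of_sum_eq_four {k : ℕ} (d : Fin k → Fin k → ℕ) (hdiag : ∀ i, d i i = 1)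
    (hsymm : ∀ i j, d i j = d j i) (hle : ∀ i j, d i j ≤ 1) (hsum : ∑ i, ∑ j, d i j = 4) :
    (k = 4 ∧ ∀ i j, i ≠ j → d i j = 0) ∨ (k = 2 ∧ ∀ i j, d i j = 1) := by
  have hk : k ≤ 4 := calc
    k = ∑ i, d i i := by simp [hdiag]
    _ ≤ ∑ i, ∑ j, d i j := Finset.sum_le_sum fun i _ =>
      Finset.single_le_sum (fun j _ => Nat.zero_le (d i j)) (Finset.mem_univ i)
    _ = 4 := hsum
  interval_cases k
  · simp at hsum
  · simp [hdiag] at hsum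
  · simp only [Fin.sum_univ_two, hdiag] at hsum
    refine Or.inr ⟨rfl, fun i j => ?_⟩
    have := hsymm 0 1
    fin_cases i <;> fin_cases j <;> simp [hdiag] <;> omega
  · simp only [Fin.sum_univ_three, hdiag] at hsum
    have := hsymm 0 1; have := hsymm 0 2; have := hsymm 1 2
    have := hle 0 1; have := hle 0 2; have := hle 1 2
    omega
  · simp only [Fin.sum_univ_four, hdiag] at hsum
    refine Or.inl ⟨rfl, fun i j hij => ?_⟩
    fin_cases i <;> fin_cases j <;> simp at hij ⊢ <;> omega

section Dichotomy

variable {H : Type*} [Group H] {V : Type*} [AddCommGroup V] [Module ℂ V]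

theorem decomposesAsFourDistinctIrreds_or_decomposesAsTwiceIrred [Finite H]
    [FiniteDimensional ℂ V] (τ : Representation ℂ H V)
    (h4 : Module.finrank ℂ (equivariantHoms τ τ) = 4) :
    DecomposesAsFourDistinctIrreds τ ∨ DecomposesAsTwiceIrred τ := by
  obtain ⟨k, U, hU, hind, hsup, hirr⟩ := exists_irreducible_decomposition τ ⊤ fun _ _ _ => trivial
  have hd := fun i j => finrank_equivariantHoms_of_irreducible (hirr i) (hirr j)
  rcases eq_four_or_eq_two_of_sum_eq_four _ (fun i => by simp [hd, IsRepEquiv.refl])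
      (fun i j => by rw [hd, hd]; congr 1; exact propext ⟨IsRepEquiv.symm, IsRepEquiv.symm⟩)
      (fun i j => by rw [hd]; split_ifs <;> omega)
      ((finrank_equivariantHoms_eq_sum hU hind hsup).symm.trans h4)
    with ⟨rfl, hoff⟩ | ⟨rfl, hall⟩
  · exact Or.inl ⟨U, hU, hind, hsup, hirr, fun i j hij he => by simpa [hd, he] using hoff i j hij⟩
  · have hcompl : IsCompl (U 0) (U 1) := by
      refine (DirectSum.isInternal_submodule_iff_isCompl U (by decide) ?_).mp
        (DirectSum.isInternal_submodule_of_iSupIndep_of_iSup_eq_top hind hsup)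
      ext i; fin_cases i <;> simp
    refine Or.inr ⟨U 0, U 1, hU 0, hU 1, hcompl.inf_eq_bot, hcompl.sup_eq_top, hirr 0, ?_⟩
    by_contra he
    simpa [hd, he] using hall 0 1

theorem not_decomposesAsFourDistinctIrreds_and_decomposesAsTwiceIrred
    (τ : Representation ℂ H V) (hfour : DecomposesAsFourDistinctIrreds τ)
    (htwice : DecomposesAsTwiceIrred τ) : False := by
  obtain ⟨W, hW, -, -, hWirr, hdistinct⟩ := hfour
  obtain ⟨U₁, U₂, h₁, h₂, hinf, hsup, hirr₁, h₁₂⟩ := htwice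
  have hint : DirectSum.IsInternal ![U₁, U₂] := by
    refine (DirectSum.isInternal_submodule_iff_isCompl _ (by decide : (0 : Fin 2) ≠ 1) ?_).mpr
      ⟨disjoint_iff.mpr hinf, codisjoint_iff.mpr hsup⟩
    ext i; fin_cases i <;> simp
  have hU : ∀ i, ∀ g, ∀ v ∈ ![U₁, U₂] i, τ g v ∈ ![U₁, U₂] i := by
    intro i; fin_cases i
    exacts [h₁, h₂]
  have hequiv₁ : ∀ i, IsRepEquiv (resSub τ (![U₁, U₂] i) (hU i)) (resSub τ U₁ h₁) := by
    intro i; fin_cases i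
    exacts [IsRepEquiv.refl _, h₁₂.symm]
  have hsummand : ∀ i, IsRepEquiv (resSub τ (W i) (hW i)) (resSub τ U₁ h₁) := fun i =>
    let ⟨j, hj⟩ := exists_isRepEquiv_of_iSupIndep hU hint.submodule_iSupIndep
      hint.submodule_iSup_eq_top
      (fun j => hirr₁.of_isRepEquiv (hequiv₁ j).symm) (hW i) (hWirr i)
    hj.trans (hequiv₁ j)
  exact hdistinct 0 1 (by decide) ((hsummand 0).trans (hsummand 1).symm)

end Dichotomy

section Involutions

variable {K X : Type*} [Field K] [NeZero (2 : K)] [AddCommGroup X] [Module K X]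
  [FiniteDimensional K X]

lemma finrank_eq_finrank_inf_eigenspace_add (S : Module.End K X) {A : Submodule K X}
    (hSA : ∀ x ∈ A, S x ∈ A) (hS : ∀ x ∈ A, S (S x) = x) :
    Module.finrank K A =
      Module.finrank K ↥(A ⊓ S.eigenspace 1) + Module.finrank K ↥(A ⊓ S.eigenspace (-1)) := by
  have hne : (1 : K) ≠ -1 := fun h => (two_ne_zero : (2 : K) ≠ 0) (by linear_combination h)
  have hinf : A ⊓ S.eigenspace 1 ⊓ (A ⊓ S.eigenspace (-1)) = ⊥ :=
    eq_bot_iff.mpr fun x hx =>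
      (S.eigenspaces_iSupIndep.pairwiseDisjoint hne).le_bot ⟨hx.1.2, hx.2.2⟩
  have hsup : A ⊓ S.eigenspace 1 ⊔ A ⊓ S.eigenspace (-1) = A := by
    refine le_antisymm (sup_le inf_le_left inf_le_left) fun x hx => Submodule.mem_sup.mpr
      ⟨(2⁻¹ : K) • (x + S x), ⟨A.smul_mem _ (A.add_mem hx (hSA x hx)), ?_⟩,
        (2⁻¹ : K) • (x - S x), ⟨A.smul_mem _ (A.sub_mem hx (hSA x hx)), ?_⟩, ?_⟩
    · rw [SetLike.mem_coe, Module.End.mem_eigenspace_iff, map_smul, map_add, hS x hx, add_comm,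
        one_smul]
    · rw [SetLike.mem_coe, Module.End.mem_eigenspace_iff, map_smul, map_sub, hS x hx]
      module
    · rw [← smul_add, add_add_sub_cancel, ← two_smul K x, smul_smul,
        inv_mul_cancel₀ two_ne_zero, one_smul]
  rw [← Submodule.finrank_sup_add_finrank_inf_eq, hsup, hinf, finrank_bot, add_zero]

lemma finrank_eq_sum_finrank_inf_eigenspace (S T : Module.End K X) {A : Submodule K X}
    (hSA : ∀ x ∈ A, S x ∈ A) (hTA : ∀ x ∈ A, T x ∈ A) (hS : ∀ x ∈ A, S (S x) = x)
    (hT : ∀ x ∈ A, T (T x) = x) (hST : ∀ x ∈ A, S (T x) = T (S x)) :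
    Module.finrank K A =
      Module.finrank K ↥(A ⊓ S.eigenspace 1 ⊓ T.eigenspace 1) +
      Module.finrank K ↥(A ⊓ S.eigenspace 1 ⊓ T.eigenspace (-1)) +
      Module.finrank K ↥(A ⊓ S.eigenspace (-1) ⊓ T.eigenspace 1) +
      Module.finrank K ↥(A ⊓ S.eigenspace (-1) ⊓ T.eigenspace (-1)) := by
  have hTA' : ∀ c, ∀ x ∈ A ⊓ S.eigenspace c, T x ∈ A ⊓ S.eigenspace c := by
    rintro c x ⟨hxA, hxS⟩
    rw [SetLike.mem_coe, Module.End.mem_eigenspace_iff] at hxS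
    exact ⟨hTA x hxA, Module.End.mem_eigenspace_iff.mpr (by rw [hST x hxA, hxS, map_smul])⟩
  rw [finrank_eq_finrank_inf_eigenspace_add S hSA hS,
    finrank_eq_finrank_inf_eigenspace_add T (hTA' 1) (fun x hx => hT x hx.1),
    finrank_eq_finrank_inf_eigenspace_add T (hTA' (-1)) (fun x hx => hT x hx.1)]
  ring

end Involutions

def eigenStabilizer {k X : Type*} [CommSemiring k] [AddCommMonoid X] [Module k X]
    (σ : Representation k G X) (χ : G →* kˣ) (x : X) : Subgroup G where
  carrier := {g | σ g x = (χ g : k) • x}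
  one_mem' := by simp
  mul_mem' {a b} (ha : σ a x = _) (hb : σ b x = _) := show σ (a * b) x = _ by
    rw [map_mul, Module.End.mul_apply, hb, map_smul, ha, smul_smul, map_mul, Units.val_mul,
      mul_comm]
  inv_mem' {a} (ha : σ a x = _) := show σ a⁻¹ x = _ from
    calc σ a⁻¹ x = (χ a⁻¹ : k) • σ a⁻¹ ((χ a : k) • x) := by
          rw [map_smul, smul_smul, ← Units.val_mul, ← map_mul, inv_mul_cancel, map_one,
            Units.val_one, one_smul]
      _ = (χ a⁻¹ : k) • x := by rw [← ha, Representation.inv_self_apply]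

lemma mem_eigenStabilizer {k X : Type*} [CommSemiring k] [AddCommMonoid X] [Module k X]
    {σ : Representation k G X} {χ : G →* kˣ} {x : X} {g : G} :
    g ∈ eigenStabilizer σ χ x ↔ σ g x = (χ g : k) • x := Iff.rfl

lemma linHom_apply_eq_smul_iff {k V W : Type*} [CommSemiring k] [AddCommMonoid V] [Module k V]
    [AddCommMonoid W] [Module k W] (π : Representation k G V) (ρ : Representation k G W)
    (f : V →ₗ[k] W) (g : G) (c : k) :
    Representation.linHom π ρ g f = c • f ↔ ∀ v, c • f (π g v) = ρ g (f v) := by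
  rw [Representation.linHom_apply]
  constructor
  · intro h v
    simpa using (LinearMap.congr_fun h (π g v)).symm
  · intro h
    ext v
    simpa using (h (π g⁻¹ v)).symm

section Commutant

variable {V : Type*} [AddCommGroup V] [Module ℂ V] (π : Representation ℂ G V)
  {N : Subgroup G} {f : V →ₗ[ℂ] V}

lemma mem_equivariantHoms_comp_subtype_iff :
    f ∈ equivariantHoms (π.comp N.subtype) (π.comp N.subtype) ↔
      ∀ n ∈ N, Representation.linHom π π n f = f := by
  have hfix : ∀ n, Representation.linHom π π n f = f ↔ ∀ v, f (π n v) = π n (f v) := fun n => by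
    simpa using linHom_apply_eq_smul_iff π π f n 1
  simp only [hfix]
  exact ⟨fun h n hn v => h ⟨n, hn⟩ v, fun h n v => h n n.2 v⟩

lemma mem_equivariantHoms_twist_iff {χ : G →* ℂˣ} :
    f ∈ equivariantHoms (twist π χ) π ↔ ∀ g, Representation.linHom π π g f = (χ g : ℂ) • f := by
  show (∀ g v, f (twist π χ g v) = π g (f v)) ↔ _
  simp only [linHom_apply_eq_smul_iff, twist_apply, map_smul]

lemma linHom_apply_eq_of_mk_eq (hf : f ∈ equivariantHoms (π.comp N.subtype) (π.comp N.subtype))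
    {x y : G} (h : (x : G ⧸ N) = y) :
    Representation.linHom π π x f = Representation.linHom π π y f := by
  have hxy := QuotientGroup.eq.mp h
  rw [show y = x * (x⁻¹ * y) by group, map_mul, Module.End.mul_apply,
    (mem_equivariantHoms_comp_subtype_iff π).mp hf _ hxy]

lemma linHom_apply_mem_equivariantHoms_comp_subtype [N.Normal]
    (hf : f ∈ equivariantHoms (π.comp N.subtype) (π.comp N.subtype)) (g : G) :
    Representation.linHom π π g f ∈ equivariantHoms (π.comp N.subtype) (π.comp N.subtype) := by
  refine (mem_equivariantHoms_comp_subtype_iff π).mpr fun n hn => ?_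
  rw [← Module.End.mul_apply, ← map_mul]
  exact linHom_apply_eq_of_mk_eq π hf (by
    rw [QuotientGroup.mk_mul, (QuotientGroup.eq_one_iff n).mpr hn, one_mul])

lemma equivariantHoms_twist_eq_inf {g₁ g₂ : G} (hgen : N ⊔ Subgroup.closure {g₁, g₂} = ⊤)
    {χ : G →* ℂˣ} (hχ : ∀ n ∈ N, χ n = 1) :
    equivariantHoms (twist π χ) π =
      equivariantHoms (π.comp N.subtype) (π.comp N.subtype) ⊓
        Module.End.eigenspace (Representation.linHom π π g₁) (χ g₁ : ℂ) ⊓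
        Module.End.eigenspace (Representation.linHom π π g₂) (χ g₂ : ℂ) := by
  ext f
  simp only [Submodule.mem_inf, Module.End.mem_eigenspace_iff, mem_equivariantHoms_twist_iff,
    mem_equivariantHoms_comp_subtype_iff]
  refine ⟨fun h => ⟨⟨fun n hn => by simpa [hχ n hn] using h n, h g₁⟩, h g₂⟩, ?_⟩
  rintro ⟨⟨hN, h₁⟩, h₂⟩ g
  have hle : N ⊔ Subgroup.closure {g₁, g₂} ≤ eigenStabilizer (Representation.linHom π π) χ f :=
    sup_le (fun n hn => by simpa [mem_eigenStabilizer, hχ n hn] using hN n hn)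
      ((Subgroup.closure_le _).mpr
        (Set.insert_subset_iff.mpr ⟨h₁, Set.singleton_subset_iff.mpr h₂⟩))
  exact hle (hgen ▸ Subgroup.mem_top g)

end Commutant

notation "K₄" => Multiplicative (ZMod 2) × Multiplicative (ZMod 2)

section KleinQuotient

set_option synthInstance.maxSize 1000 in
lemma klein_four_eq_one_or_eq_or_eq_or_eq_mul : ∀ a b x : K₄,
    a ≠ 1 → b ≠ 1 → a ≠ b → x = 1 ∨ x = a ∨ x = b ∨ x = a * b := by
  decide

variable {N : Subgroup G} [N.Normal]

lemma mul_self_eq_one_of_klein (e : G ⧸ N ≃* K₄) (q : G ⧸ N) : q * q = 1 :=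
  e.injective (by rw [map_mul, map_one]; generalize e q = a; revert a; decide)

lemma mul_comm_of_klein (e : G ⧸ N ≃* K₄) (a b : G ⧸ N) : a * b = b * a :=
  e.injective (by rw [map_mul, map_mul, mul_comm])

lemma sup_closure_eq_top_of_klein (e : G ⧸ N ≃* K₄) {g₁ g₂ : G} (h₁ : g₁ ∉ N) (h₂ : g₂ ∉ N)
    (h₁₂ : g₁⁻¹ * g₂ ∉ N) : N ⊔ Subgroup.closure {g₁, g₂} = ⊤ := by
  have hne : ∀ a b : G, a⁻¹ * b ∉ N → e a ≠ e b := fun a b h he =>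
    h (QuotientGroup.eq.mp (e.injective he))
  have hmem : ∀ w ∈ N ⊔ Subgroup.closure {g₁, g₂}, ∀ x : G, e x = e w →
      x ∈ N ⊔ Subgroup.closure {g₁, g₂} := fun w hw x hx => by
    simpa using Subgroup.mul_mem _ hw
      (Subgroup.mem_sup_left (QuotientGroup.eq.mp (e.injective hx).symm))
  have hg₁ : g₁ ∈ N ⊔ Subgroup.closure {g₁, g₂} :=
    Subgroup.mem_sup_right (Subgroup.subset_closure (by simp))
  have hg₂ : g₂ ∈ N ⊔ Subgroup.closure {g₁, g₂} :=
    Subgroup.mem_sup_right (Subgroup.subset_closure (by simp))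
  refine eq_top_iff.mpr fun x _ => ?_
  rcases klein_four_eq_one_or_eq_or_eq_or_eq_mul (e g₁) (e g₂) (e x)
    (by simpa using (hne 1 g₁ (by simpa)).symm) (by simpa using (hne 1 g₂ (by simpa)).symm)
    (hne g₁ g₂ h₁₂) with h | h | h | h
  · exact hmem 1 (one_mem _) x (by simpa using h)
  · exact hmem g₁ hg₁ x h
  · exact hmem g₂ hg₂ x h
  · exact hmem (g₁ * g₂) (mul_mem hg₁ hg₂) x (by simpa using h)

lemma eq_one_or_eq_neg_one_of_klein (e : G ⧸ N ≃* K₄) {ω : G →* ℂˣ}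
    (hω : ∀ n ∈ N, ω n = 1) (g : G) : ω g = 1 ∨ ω g = -1 := by
  have hg : g * g ∈ N := by
    rw [← QuotientGroup.eq_one_iff, QuotientGroup.mk_mul]
    exact mul_self_eq_one_of_klein e g
  have hsq : (ω g : ℂ) ^ 2 = 1 := by
    rw [sq, ← Units.val_mul, ← map_mul, hω _ hg, Units.val_one]
  exact (sq_eq_one_iff.mp hsq).imp Units.ext (fun h => Units.ext (by simpa using h))

lemma linHom_apply_linHom_apply_self_of_klein {V : Type*} [AddCommGroup V] [Module ℂ V]
    (π : Representation ℂ G V) (e : G ⧸ N ≃* K₄) {f : V →ₗ[ℂ] V}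
    (hf : f ∈ equivariantHoms (π.comp N.subtype) (π.comp N.subtype)) (g : G) :
    Representation.linHom π π g (Representation.linHom π π g f) = f := by
  rw [← Module.End.mul_apply, ← map_mul, linHom_apply_eq_of_mk_eq π hf (y := 1)
    (by rw [QuotientGroup.mk_mul, mul_self_eq_one_of_klein e, QuotientGroup.mk_one]), map_one,
    Module.End.one_apply]

lemma linHom_apply_comm_of_klein {V : Type*} [AddCommGroup V] [Module ℂ V]
    (π : Representation ℂ G V) (e : G ⧸ N ≃* K₄) {f : V →ₗ[ℂ] V}
    (hf : f ∈ equivariantHoms (π.comp N.subtype) (π.comp N.subtype)) (g h : G) :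
    Representation.linHom π π g (Representation.linHom π π h f) =
      Representation.linHom π π h (Representation.linHom π π g f) := by
  rw [← Module.End.mul_apply, ← map_mul, ← Module.End.mul_apply, ← map_mul,
    linHom_apply_eq_of_mk_eq π hf (y := h * g)
      (by rw [QuotientGroup.mk_mul, mul_comm_of_klein e, QuotientGroup.mk_mul])]

end KleinQuotient

lemma exists_eq_neg_one_and_eq_one {ω ω' : G →* ℂˣ} (hω : ∀ g, ω g = 1 ∨ ω g = -1)
    (hω' : ∀ g, ω' g = 1 ∨ ω' g = -1) (hne : ω ≠ ω') (h1 : ω ≠ 1) :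
    ∃ g, ω g = -1 ∧ ω' g = 1 := by
  obtain ⟨b, hb⟩ : ∃ b, ω b = -1 := by
    by_contra! h
    exact h1 (MonoidHom.ext fun g => (hω g).resolve_right (h g))
  by_contra! h
  have h' : ∀ g, ω g = -1 → ω' g = -1 := fun g hg => (hω' g).resolve_left (h g hg)
  refine hne (MonoidHom.ext fun g => ?_)
  rcases hω g with hg | hg
  · have hbg := h' (b * g) (by rw [map_mul, hb, hg, mul_one])
    rw [map_mul, h' b hb] at hbg
    exact hg.trans (mul_eq_left.mp hbg).symm
  · exact hg.trans (h' g hg).symm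

theorem finrank_equivariantHoms_comp_subtype_eq_four {V : Type*} [AddCommGroup V] [Module ℂ V]
    [FiniteDimensional ℂ V] {N : Subgroup G} [N.Normal] (e : G ⧸ N ≃* K₄) {ω₁ ω₂ : G →* ℂˣ}
    (hne : ω₁ ≠ ω₂) (hω₁ : ω₁ ≠ 1) (hω₂ : ω₂ ≠ 1)
    (hω₁N : ∀ n ∈ N, ω₁ n = 1) (hω₂N : ∀ n ∈ N, ω₂ n = 1)
    {π : Representation ℂ G V} (hπ : IsIrreducibleRep π)
    (h₁ : IsRepEquiv π (twist π ω₁)) (h₂ : IsRepEquiv π (twist π ω₂)) :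
    Module.finrank ℂ (equivariantHoms (π.comp N.subtype) (π.comp N.subtype)) = 4 := by
  have hsign₁ := eq_one_or_eq_neg_one_of_klein e hω₁N
  have hsign₂ := eq_one_or_eq_neg_one_of_klein e hω₂N
  obtain ⟨g₁, h₁₁, h₂₁⟩ := exists_eq_neg_one_and_eq_one hsign₁ hsign₂ hne hω₁
  obtain ⟨g₂, h₂₂, h₁₂⟩ := exists_eq_neg_one_and_eq_one hsign₂ hsign₁ hne.symm hω₂
  have hneg : (-1 : ℂˣ) ≠ 1 := fun h => by norm_num [Units.ext_iff] at h
  have hgen : N ⊔ Subgroup.closure {g₁, g₂} = ⊤ := sup_closure_eq_top_of_klein e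
    (fun h => hneg (h₁₁ ▸ hω₁N g₁ h)) (fun h => hneg (h₂₂ ▸ hω₂N g₂ h))
    (fun h => hneg (by simpa [h₁₁, h₁₂] using hω₁N _ h))
  have hdim : ∀ χ : G →* ℂˣ, IsRepEquiv π (twist π χ) →
      Module.finrank ℂ (equivariantHoms (twist π χ) π) = 1 := fun χ h =>
    finrank_equivariantHoms_of_isRepEquiv hπ h.symm
  have hχ₁₂ : ∀ n ∈ N, (ω₁ * ω₂) n = 1 := fun n hn => by simp [hω₁N n hn, hω₂N n hn]
  have e₀ := equivariantHoms_twist_eq_inf π hgen (χ := 1) fun _ _ => rfl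
  have e₁ := equivariantHoms_twist_eq_inf π hgen hω₁N
  have e₂ := equivariantHoms_twist_eq_inf π hgen hω₂N
  have e₁₂ := equivariantHoms_twist_eq_inf π hgen hχ₁₂
  simp only [MonoidHom.one_apply, MonoidHom.mul_apply, h₁₁, h₂₁, h₂₂, h₁₂, Units.val_one,
    Units.val_neg, mul_one, mul_neg] at e₀ e₁ e₂ e₁₂
  rw [finrank_eq_sum_finrank_inf_eigenspace (Representation.linHom π π g₁)
    (Representation.linHom π π g₂)
    (fun f hf => linHom_apply_mem_equivariantHoms_comp_subtype π hf g₁)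
    (fun f hf => linHom_apply_mem_equivariantHoms_comp_subtype π hf g₂)
    (fun f hf => linHom_apply_linHom_apply_self_of_klein π e hf g₁)
    (fun f hf => linHom_apply_linHom_apply_self_of_klein π e hf g₂)
    (fun f hf => linHom_apply_comm_of_klein π e hf g₁ g₂), ← e₀, ← e₁, ← e₂, ← e₁₂,
    hdim 1 ⟨LinearEquiv.refl ℂ V, fun g v => by simp⟩, hdim ω₁ h₁, hdim ω₂ h₂,
    hdim _ (h₁.twist_mul h₂)]

/-- Let `N ⊴ G` with `G/N ≅ ℤ/2 × ℤ/2`, let `ω₁ ≠ ω₂` be distinct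
nontrivial characters of `G` trivial on `N`, and let `π` be an irreducible complex
representation of `G` with `π ≅ π ⊗ ω₁` and `π ≅ π ⊗ ω₂`.  Then exactly one of the
following holds: `Res_N π` is a direct sum of four pairwise non-isomorphic irreducible
representations, or `Res_N π ≅ ρ ⊕ ρ` for a single irreducible `ρ`. -/
theorem restriction_klein_four_dichotomy
    {G : Type*} [Group G] [Finite G] (N : Subgroup G) [N.Normal]
    (hquot : Nonempty ((G ⧸ N) ≃* Multiplicative (ZMod 2) × Multiplicative (ZMod 2)))
    (ω₁ ω₂ : G →* ℂˣ) (hne : ω₁ ≠ ω₂) (hω₁ : ω₁ ≠ 1) (hω₂ : ω₂ ≠ 1)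
    (hω₁N : ∀ n ∈ N, ω₁ n = 1) (hω₂N : ∀ n ∈ N, ω₂ n = 1)
    {V : Type*} [AddCommGroup V] [Module ℂ V] [FiniteDimensional ℂ V]
    (π : Representation ℂ G V) (hπ : IsIrreducibleRep π)
    (h₁ : IsRepEquiv π (twist π ω₁)) (h₂ : IsRepEquiv π (twist π ω₂)) :
    Xor' (DecomposesAsFourDistinctIrreds (π.comp N.subtype))
      (DecomposesAsTwiceIrred (π.comp N.subtype)) := by
  obtain ⟨e⟩ := hquot
  have hdim := finrank_equivariantHoms_comp_subtype_eq_four e hne hω₁ hω₂ hω₁N hω₂N hπ h₁ h₂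
  have hexcl := not_decomposesAsFourDistinctIrreds_and_decomposesAsTwiceIrred (π.comp N.subtype)
  rcases decomposesAsFourDistinctIrreds_or_decomposesAsTwiceIrred _ hdim with h | h
  · exact Or.inl ⟨h, hexcl h⟩
  · exact Or.inr ⟨h, fun h' => hexcl h' h⟩

end RestrictionMult
end
end
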